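/- Let k be a field, let a, b ≥ 1 be integers, let W_m denote the k-vector space of homogeneous polynomials of degree m in two variables s, t, and let φ : W_{a+b} → k be a nonzero k-linear functional. Then the (a+1) × (b+1) Hankel matrix M(φ) with entries M(φ)_{i,j} = φ(s^{a+b-i-j} t^{i+j}) has rank 1 if and only if φ is a nonzero scalar multiple of an evaluation functional: there exist (s_0, t_0) ∈ k² with (s_0, t_0) ≠ (0,0) and c ∈ k with c ≠ 0 such that φ(A) = c · A(s_0, t_0) for all A ∈ W_{a+b}, equivalently φ(s^{a+b-j} t^j) = c · s_0^{a+b-j} t_0^{j} for all 0 ≤ j ≤ a+b. (In projective terms, the rank-one locus of the Hankel matrix in P(W_{a+b})^* is the rational normal curve consisting of the hyperplanes { A ∈ W_{a+b} : A(p) = 0 } for p ∈ P¹.) -/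

import Mathlib

/-!
A rank-one matrix is an outer product, so the moments `y m = φ (s^(a+b-m) t^m)` factor as
`y (i + j) = u i * v j`. For `j < b` with `(v j, v (j + 1)) ≠ 0`, the point
`(s₀, t₀) = (v j, v (j + 1))` satisfies `s₀ * u (i + 1) = t₀ * u i`; as every `p < a + b` is
some `i + j'` with `i < a`, the whole moment sequence obeys `s₀ * y (p + 1) = t₀ * y p`, which
forces `y m = c * s₀^(a+b-m) * t₀^m`. Since the monomials span the binary forms, this says
`φ = c • eval (s₀, t₀)`. Conversely, the Hankel matrix of such a sequence is the outer product
of `(c s₀^(a-i) t₀^i)ᵢ` and `(s₀^(b-j) t₀^j)ⱼ`.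
-/

open MvPolynomial

noncomputable section

lemma monomial_mem_homog (k : Type*) [Field k] (m j : ℕ) (hj : j ≤ m) :
    (X 0 ^ (m - j) * X 1 ^ j : MvPolynomial (Fin 2) k) ∈
      homogeneousSubmodule (Fin 2) k m := by
  rw [mem_homogeneousSubmodule]
  have h := ((isHomogeneous_X (R := k) (0 : Fin 2)).pow (m - j)).mul
    ((isHomogeneous_X (R := k) (1 : Fin 2)).pow j)
  simpa only [one_mul, Nat.sub_add_cancel hj] using h

namespace Matrix

variable {m n K : Type*} [Fintype m] [Fintype n] [Field K]

theorem eq_zero_of_rank_eq_zero {A : Matrix m n K} (h : A.rank = 0) : A = 0 := by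
  rw [rank_eq_finrank_span_cols, Submodule.finrank_eq_zero, Submodule.span_eq_bot] at h
  ext i j
  exact congrFun (h _ ⟨j, rfl⟩) i

theorem rank_eq_one_iff_exists_vecMulVec {A : Matrix m n K} :
    A.rank = 1 ↔ A ≠ 0 ∧ ∃ u v, A = vecMulVec u v := by
  constructor
  · intro h
    refine ⟨fun h0 => by simp [h0] at h, ?_⟩
    rw [rank_eq_finrank_span_cols] at h
    obtain ⟨w, -, hw⟩ := finrank_eq_one_iff'.mp h
    choose v hv using fun j => hw ⟨Aᵀ j, Submodule.subset_span ⟨j, rfl⟩⟩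
    refine ⟨w, v, ?_⟩
    ext i j
    rw [vecMulVec_apply, mul_comm, ← transpose_apply A j i]
    exact congrFun (congrArg Subtype.val (hv j)).symm i
  · rintro ⟨hA, u, v, rfl⟩
    have := rank_vecMulVec_le u v
    have : (vecMulVec u v).rank ≠ 0 := fun h0 => hA (eq_zero_of_rank_eq_zero h0)
    omega

end Matrix

section Recurrence

variable {K : Type*} [Field K]

theorem exists_eq_mul_pow_mul_pow_of_mul_succ_eq {y : ℕ → K} {n : ℕ} {s t : K}
    (hst : ¬(s = 0 ∧ t = 0)) (h : ∀ p < n, s * y (p + 1) = t * y p) :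
    ∃ c, ∀ m ≤ n, y m = c * (s ^ (n - m) * t ^ m) := by
  by_cases hs : s = 0
  · have ht : t ≠ 0 := fun ht => hst ⟨hs, ht⟩
    refine ⟨y n / t ^ n, fun m hm => ?_⟩
    rcases hm.lt_or_eq with hm | rfl
    · have hym : y m = 0 := by simpa [hs, ht] using (h m hm).symm
      rw [hym, hs, zero_pow (by omega), zero_mul, mul_zero]
    · rw [Nat.sub_self, pow_zero, one_mul, div_mul_cancel₀ _ (pow_ne_zero _ ht)]
  · have hpow : ∀ m ≤ n, y m * s ^ m = y 0 * t ^ m := by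
      intro m hm
      induction m with
      | zero => simp
      | succ m ih =>
        calc y (m + 1) * s ^ (m + 1) = s * y (m + 1) * s ^ m := by ring
          _ = t * (y m * s ^ m) := by rw [h m (by omega)]; ring
          _ = y 0 * t ^ (m + 1) := by rw [ih (by omega)]; ring
    refine ⟨y 0 / s ^ n, fun m hm => ?_⟩
    calc y m = y m * s ^ m * s ^ (n - m) / s ^ n := by
          rw [mul_assoc, ← pow_add, Nat.add_sub_cancel' hm,
            mul_div_cancel_right₀ _ (pow_ne_zero _ hs)]
      _ = y 0 / s ^ n * (s ^ (n - m) * t ^ m) := by rw [hpow m hm]; ring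

theorem exists_mul_succ_eq_of_eq_mul {a b : ℕ} (ha : 1 ≤ a) (hb : 1 ≤ b) {y u v : ℕ → K}
    (huv : ∀ i ≤ a, ∀ j ≤ b, y (i + j) = u i * v j) (hv : ∃ j ≤ b, v j ≠ 0) :
    ∃ s t : K, ¬(s = 0 ∧ t = 0) ∧ ∀ p < a + b, s * y (p + 1) = t * y p := by
  obtain ⟨j₀, hj₀, hv₀⟩ : ∃ j < b, ¬(v j = 0 ∧ v (j + 1) = 0) := by
    obtain ⟨j, hj, hvj⟩ := hv
    rcases hj.lt_or_eq with hj | rfl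
    · exact ⟨j, hj, fun h => hvj h.1⟩
    · exact ⟨j - 1, by omega, fun h => hvj (Nat.sub_add_cancel hb ▸ h.2)⟩
  have hu : ∀ i < a, v j₀ * u (i + 1) = v (j₀ + 1) * u i := by
    intro i hi
    calc v j₀ * u (i + 1) = y (i + 1 + j₀) := by rw [huv _ hi _ hj₀.le, mul_comm]
      _ = y (i + (j₀ + 1)) := by rw [Nat.add_right_comm, Nat.add_assoc]
      _ = v (j₀ + 1) * u i := by rw [huv _ hi.le _ hj₀, mul_comm]
  refine ⟨v j₀, v (j₀ + 1), hv₀, fun p hp => ?_⟩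
  obtain ⟨i, j, hi, hj, rfl⟩ : ∃ i j, i < a ∧ j ≤ b ∧ p = i + j :=
    ⟨min p (a - 1), p - min p (a - 1), by omega, by omega, by omega⟩
  rw [huv _ hi.le _ hj, show i + j + 1 = i + 1 + j by omega, huv _ hi _ hj, ← mul_assoc,
    hu i hi, mul_assoc]

end Recurrence

def hankel {R : Type*} {m n : ℕ} (y : ℕ → R) : Matrix (Fin m) (Fin n) R :=
  Matrix.of fun i j => y (i + j)

@[simp]
theorem hankel_apply {R : Type*} {m n : ℕ} (y : ℕ → R) (i : Fin m) (j : Fin n) :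
    hankel y i j = y (i + j) := rfl

section Hankel

open Matrix Fin.NatCast

variable {K : Type*} [Field K] {a b : ℕ} {y : ℕ → K}

theorem exists_eq_mul_pow_mul_pow_of_rank_hankel_eq_one (ha : 1 ≤ a) (hb : 1 ≤ b)
    (h : (hankel y : Matrix (Fin (a + 1)) (Fin (b + 1)) K).rank = 1) :
    ∃ s t c : K, ¬(s = 0 ∧ t = 0) ∧ c ≠ 0 ∧ ∀ m ≤ a + b, y m = c * (s ^ (a + b - m) * t ^ m) := by
  obtain ⟨hne, u, v, huv⟩ := rank_eq_one_iff_exists_vecMulVec.mp h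
  have hyuv : ∀ i ≤ a, ∀ j ≤ b, y (i + j) = u (i : Fin (a + 1)) * v (j : Fin (b + 1)) := by
    intro i hi j hj
    simpa [vecMulVec_apply, Fin.val_cast_of_lt (Nat.lt_succ_of_le hi),
      Fin.val_cast_of_lt (Nat.lt_succ_of_le hj)] using congrFun₂ huv i j
  obtain ⟨i, j, hij⟩ : ∃ i j, hankel y i j ≠ 0 := by
    by_contra! h0
    exact hne (ext h0)
  have hv : ∃ j ≤ b, v (j : Fin (b + 1)) ≠ 0 :=
    ⟨j, j.is_le, by rw [Fin.cast_val_eq_self]; exact right_ne_zero_of_mul (huv ▸ hij)⟩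
  obtain ⟨s, t, hst, hrec⟩ := exists_mul_succ_eq_of_eq_mul ha hb hyuv hv
  obtain ⟨c, hc⟩ := exists_eq_mul_pow_mul_pow_of_mul_succ_eq hst hrec
  refine ⟨s, t, c, hst, ?_, hc⟩
  rintro rfl
  exact hij (by simpa using hc (i + j) (by omega))

theorem rank_hankel_eq_one_of_eq_mul_pow_mul_pow {s t c : K} (hst : ¬(s = 0 ∧ t = 0))
    (hc : c ≠ 0) (hy : ∀ m ≤ a + b, y m = c * (s ^ (a + b - m) * t ^ m)) :
    (hankel y : Matrix (Fin (a + 1)) (Fin (b + 1)) K).rank = 1 := by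
  refine rank_eq_one_iff_exists_vecMulVec.mpr ⟨fun h0 => hst ⟨?_, ?_⟩, ?_⟩
  · exact (by simpa [hy, hc] using congrFun₂ h0 0 0 : s = 0 ∧ _).1
  · exact (by simpa [hy, hc] using congrFun₂ h0 (Fin.last a) (Fin.last b) : t = 0 ∧ _).1
  · refine ⟨fun i => c * (s ^ (a - i) * t ^ (i : ℕ)), fun j => s ^ (b - j) * t ^ (j : ℕ), ?_⟩
    ext i j
    rw [hankel_apply, vecMulVec_apply, hy _ (by omega),
      show a + b - (i + j) = (a - i) + (b - j) by omega]
    ring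

theorem rank_hankel_eq_one_iff (ha : 1 ≤ a) (hb : 1 ≤ b) :
    (hankel y : Matrix (Fin (a + 1)) (Fin (b + 1)) K).rank = 1 ↔
      ∃ s t c : K, ¬(s = 0 ∧ t = 0) ∧ c ≠ 0 ∧ ∀ m ≤ a + b, y m = c * (s ^ (a + b - m) * t ^ m) :=
  ⟨exists_eq_mul_pow_mul_pow_of_rank_hankel_eq_one ha hb,
    fun ⟨_, _, _, hst, hc, hy⟩ => rank_hankel_eq_one_of_eq_mul_pow_mul_pow hst hc hy⟩

end Hankel

section BinaryForms

variable {K : Type*} [Field K]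

theorem monomial_eq_X_zero_pow_mul_X_one_pow {n : ℕ} {d : Fin 2 →₀ ℕ} (hd : d.degree = n) :
    (monomial d 1 : MvPolynomial (Fin 2) K) = X 0 ^ (n - d 1) * X 1 ^ d 1 := by
  rw [Finsupp.degree_eq_sum, Fin.sum_univ_two] at hd
  rw [monomial_eq, C_1, one_mul, Finsupp.prod_fintype _ _ (by simp), Fin.prod_univ_two,
    ← hd, Nat.add_sub_cancel]

theorem homogeneousSubmodule_fin_two_linearMap_ext {V : Type*} [AddCommGroup V] [Module K V]
    {n : ℕ} {ψ₁ ψ₂ : homogeneousSubmodule (Fin 2) K n →ₗ[K] V}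
    (h : ∀ m (hm : m ≤ n), ψ₁ ⟨_, monomial_mem_homog K n m hm⟩ =
      ψ₂ ⟨_, monomial_mem_homog K n m hm⟩) : ψ₁ = ψ₂ := by
  have hspan : homogeneousSubmodule (Fin 2) K n =
      Submodule.span K ((monomial · 1) '' {d : Fin 2 →₀ ℕ | d.degree = n}) :=
    (homogeneousSubmodule_eq_finsupp_supported _ _ n).trans
      (AddMonoidAlgebra.supported_eq_span_single ..)
  ext ⟨A, hA⟩
  rw [hspan] at hA
  induction hA using Submodule.span_induction with
  | mem x hx =>
    obtain ⟨d, hd : d.degree = n, rfl⟩ := hx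
    have hle : d 1 ≤ n := by
      rw [Finsupp.degree_eq_sum, Fin.sum_univ_two] at hd; omega
    have e : (⟨_, hA⟩ : homogeneousSubmodule (Fin 2) K n) = ⟨_, monomial_mem_homog K n _ hle⟩ :=
      Subtype.ext (monomial_eq_X_zero_pow_mul_X_one_pow hd)
    rw [e]
    exact h _ hle
  | zero => exact (map_zero ψ₁).trans (map_zero ψ₂).symm
  | add x y hx hy ihx ihy =>
    rw [← hspan] at hx hy
    change ψ₁ (⟨x, hx⟩ + ⟨y, hy⟩) = ψ₂ (⟨x, hx⟩ + ⟨y, hy⟩)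
    rw [map_add, map_add, ihx, ihy]
  | smul c x hx ih =>
    rw [← hspan] at hx
    change ψ₁ (c • ⟨x, hx⟩) = ψ₂ (c • ⟨x, hx⟩)
    rw [map_smul, map_smul, ih]

def binaryFormMoment {n : ℕ} (φ : homogeneousSubmodule (Fin 2) K n →ₗ[K] K) (m : ℕ) : K :=
  if h : m ≤ n then φ ⟨_, monomial_mem_homog K n m h⟩ else 0

theorem forall_eq_mul_eval_iff_binaryFormMoment {n : ℕ}
    (φ : homogeneousSubmodule (Fin 2) K n →ₗ[K] K) (s t c : K) :
    (∀ A : homogeneousSubmodule (Fin 2) K n,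
        φ A = c * eval ![s, t] (A : MvPolynomial (Fin 2) K)) ↔
      ∀ m ≤ n, binaryFormMoment φ m = c * (s ^ (n - m) * t ^ m) := by
  constructor
  · intro h m hm
    simp [binaryFormMoment, hm, h]
  · intro h
    have hφ : φ = c • (aeval ![s, t]).toLinearMap ∘ₗ (homogeneousSubmodule (Fin 2) K n).subtype :=
      homogeneousSubmodule_fin_two_linearMap_ext fun m hm => by
        simpa [binaryFormMoment, hm] using h m hm
    intro A
    simp [hφ]

end BinaryForms

/-- Let `k` be a field, `a, b ≥ 1`, `W_m` the space of binary forms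
of degree `m` in `s = X 0`, `t = X 1`, and `φ : W_{a+b} → k` a nonzero linear
functional.  The `(a+1) × (b+1)` Hankel matrix `M(φ)`, with entries
`M(φ)_{i,j} = φ(s^{a+b-i-j} t^{i+j})`, has rank 1 if and only if `φ` is a
nonzero scalar multiple of an evaluation functional: there are `(s₀, t₀) ≠ (0,0)`
and `c ≠ 0` with `φ(A) = c · A(s₀, t₀)` for all `A ∈ W_{a+b}`. -/
theorem stmt2 {k : Type*} [Field k] (a b : ℕ) (ha : 1 ≤ a) (hb : 1 ≤ b)
    (φ : homogeneousSubmodule (Fin 2) k (a + b) →ₗ[k] k)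
    (M : Matrix (Fin (a + 1)) (Fin (b + 1)) k)
    (hM : ∀ (i : Fin (a + 1)) (j : Fin (b + 1)), M i j =
      φ ⟨X 0 ^ (a + b - ((i : ℕ) + (j : ℕ))) * X 1 ^ ((i : ℕ) + (j : ℕ)),
        monomial_mem_homog k (a + b) ((i : ℕ) + (j : ℕ))
          (by have hi := i.isLt; have hj := j.isLt; omega)⟩) :
    M.rank = 1 ↔ ∃ (s₀ t₀ c : k), ¬(s₀ = 0 ∧ t₀ = 0) ∧ c ≠ 0 ∧
      ∀ A : homogeneousSubmodule (Fin 2) k (a + b),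
        φ A = c * MvPolynomial.eval ![s₀, t₀] (A : MvPolynomial (Fin 2) k) := by
  have hMφ : M = hankel (binaryFormMoment φ) := by
    ext i j
    rw [hM, hankel_apply, binaryFormMoment, dif_pos (by omega)]
  simp only [hMφ, rank_hankel_eq_one_iff ha hb, forall_eq_mul_eval_iff_binaryFormMoment]
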